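/- arXiv:2604.15498 — 7 statements merged into one kernel-verified Lean document; each statement's English description precedes it below -/
import Mathlib

section
/- Let Q be a poset with least element 0 belonging to the class P^ℓ_MFP. Then the intersection of all minimal prime ideals of Q equals {0}, and consequently the intersection of all prime ideals of Q also equals {0}. -/
namespace ZD

variable (Q : Type*) [PartialOrder Q] [OrderBot Q]

variable {Q} in
/-- The lower cone `A^ℓ` of a subset of a poset. -/
def lCone (A : Set Q) : Set Q := {x | ∀ a ∈ A, x ≤ a}

variable {Q} in
/-- The upper cone `A^u` of a subset of a poset. -/
def uCone (A : Set Q) : Set Q := {x | ∀ a ∈ A, a ≤ x}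

variable {Q} in
/-- An ideal of a poset: nonempty and `a, b ∈ I` implies `{a,b}^{uℓ} ⊆ I`. -/
def IsIdeal (I : Set Q) : Prop :=
  I.Nonempty ∧ ∀ a ∈ I, ∀ b ∈ I, lCone (uCone {a, b}) ⊆ I

variable {Q} in
/-- A filter of a poset: nonempty and `a, b ∈ F` implies `{a,b}^{ℓu} ⊆ F`. -/
def IsPFilter (F : Set Q) : Prop :=
  F.Nonempty ∧ ∀ a ∈ F, ∀ b ∈ F, uCone (lCone {a, b}) ⊆ F

variable {Q} in
/-- An ℓ-filter: a filter such that `{a,b}^ℓ ∩ F ≠ ∅` for all `a, b ∈ F`. -/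
def IsLFilter (F : Set Q) : Prop :=
  IsPFilter F ∧ ∀ a ∈ F, ∀ b ∈ F, (lCone {a, b} ∩ F).Nonempty

variable {Q} in
/-- A prime ideal of a poset. -/
def IsPrimeIdeal (P : Set Q) : Prop :=
  IsIdeal P ∧ P ≠ Set.univ ∧ ∀ x y : Q, lCone {x, y} ⊆ P → x ∈ P ∨ y ∈ P

variable {Q} in
/-- A prime filter of a poset. -/
def IsPrimeFilter (F : Set Q) : Prop :=
  IsPFilter F ∧ F ≠ Set.univ ∧ ∀ x y : Q, uCone {x, y} ⊆ F → x ∈ F ∨ y ∈ F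

variable {Q} in
/-- A maximal filter: maximal among proper filters. -/
def IsMaxFilter (F : Set Q) : Prop :=
  IsPFilter F ∧ F ≠ Set.univ ∧
    ∀ G : Set Q, IsPFilter G → G ≠ Set.univ → F ⊆ G → F = G

variable {Q} in
/-- A maximal ℓ-filter: maximal among proper ℓ-filters. -/
def IsMaxLFilter (F : Set Q) : Prop :=
  IsLFilter F ∧ F ≠ Set.univ ∧
    ∀ G : Set Q, IsLFilter G → G ≠ Set.univ → F ⊆ G → F = G

/-- The class `P^ℓ_MFP`: every maximal filter is prime and every maximal ℓ-filter
is a maximal filter. -/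
def MemPMFPl : Prop :=
  (∀ F : Set Q, IsMaxFilter F → IsPrimeFilter F) ∧
  (∀ F : Set Q, IsMaxLFilter F → IsMaxFilter F)

variable {Q} in
/-- A minimal prime ideal of a poset. -/
def IsMinPrimeIdeal (P : Set Q) : Prop :=
  IsPrimeIdeal P ∧ ∀ P' : Set Q, IsPrimeIdeal P' → P' ⊆ P → P' = P

variable {Q} in
/-- The annihilator `x^⊥` of an element. -/
def ann (x : Q) : Set Q := {y | lCone {x, y} = {⊥}}

variable {Q} in
/-- The annihilator `A^⊥` of a subset. -/
def annSet (A : Set Q) : Set Q := {y | ∀ x ∈ A, lCone {x, y} = {⊥}}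

variable {Q} in
/-- The smallest ideal `(x] ∨ (y]` containing the principal ideals `(x]` and `(y]`. -/
def idealSup (x y : Q) : Set Q :=
  ⋂₀ {I : Set Q | IsIdeal I ∧ Set.Iic x ⊆ I ∧ Set.Iic y ⊆ I}

/-- A poset is quasi-complemented if for every `x` there is `y ≠ x` with
`{x,y}^ℓ = {0}` and `((x] ∨ (y])^⊥ = {0}`. -/
def QuasiComplemented : Prop :=
  ∀ x : Q, ∃ y : Q, y ≠ x ∧ lCone {x, y} = {⊥} ∧ annSet (idealSup x y) = {⊥}

/-- A poset is weakly quasi-complemented if for every `x` there are finitely many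
`y₁, …, yₙ` (n ≥ 1), all distinct from `x`, with `x^⊥⊥ = y₁^⊥ ∩ ⋯ ∩ yₙ^⊥`. -/
def WeaklyQuasiComplemented : Prop :=
  ∀ x : Q, ∃ s : Finset Q, s.Nonempty ∧ x ∉ s ∧ annSet (ann x) = ⋂ y ∈ s, ann y

/-- The annihilator condition (a.c.). -/
def SatisfiesAC : Prop := ∀ x y : Q, ∃ z : Q, ann x ∩ ann y = ann z

/-- The prime spectrum of a poset. -/
def Spec := {P : Set Q // IsPrimeIdeal P}

/-- The Zariski topology on `Spec Q`, whose closed sets are the sets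
`V(I) = {P : I ⊆ P}` for ideals `I` of `Q`. -/
instance : TopologicalSpace (Spec Q) :=
  TopologicalSpace.generateFrom
    {U : Set (Spec Q) | ∃ I : Set Q, IsIdeal I ∧ U = {P : Spec Q | ¬ I ⊆ P.1}}

variable {Q} in
/-- `V(x)`: the prime ideals containing `x`. -/
def zV (x : Q) : Set (Spec Q) := {P : Spec Q | x ∈ P.1}

variable {Q} in
/-- `D(x)`: the prime ideals not containing `x`. -/
def zD (x : Q) : Set (Spec Q) := {P : Spec Q | x ∉ P.1}

/-- `Min(Q)` as a subset of `Spec Q`. -/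
def MinSpec : Set (Spec Q) := {P : Spec Q | ∀ P' : Set Q, IsPrimeIdeal P' → P' ⊆ P.1 → P' = P.1}

variable {Q} in
/-- Adjacency in the zero-divisor graph `Γ(Q)`. -/
def zdAdj (x y : Q) : Prop :=
  x ≠ y ∧ x ≠ ⊥ ∧ y ≠ ⊥ ∧ lCone {x, y} = ({⊥} : Set Q)

variable {Q} in
/-- Vertices of the zero-divisor graph `Γ(Q)`: the nonzero zero-divisors. -/
def IsZDVertex (x : Q) : Prop :=
  x ≠ ⊥ ∧ ∃ y : Q, y ≠ ⊥ ∧ lCone {x, y} = ({⊥} : Set Q)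

variable {Q} in
/-- `y` is a complement of `x` in `Γ(Q)`. -/
def IsComplementOf (x y : Q) : Prop :=
  zdAdj x y ∧ ∀ c : Q, ¬ (zdAdj c x ∧ zdAdj c y)

/-- The zero-divisor graph `Γ(Q)` is complemented. -/
def GammaComplemented : Prop :=
  ∀ x : Q, IsZDVertex x → ∃ y : Q, IsComplementOf x y

/-- The zero-divisor graph `Γ(Q)` is uniquely complemented. -/
def GammaUniquelyComplemented : Prop :=
  GammaComplemented Q ∧
    ∀ a b c : Q, IsComplementOf a b → IsComplementOf a c →
      ∀ x : Q, (zdAdj x b ↔ zdAdj x c)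

end ZD

section Aux
open ZD
variable {Q : Type*} [PartialOrder Q] [OrderBot Q]

omit [OrderBot Q] in
lemma mem_lCone_pair {z a b : Q} : z ∈ lCone {a, b} ↔ z ≤ a ∧ z ≤ b := by
  simp [lCone]

lemma bot_mem_ideal {I : Set Q} (hI : IsIdeal I) : ⊥ ∈ I := by
  obtain ⟨⟨a, ha⟩, h⟩ := hI
  exact h a ha a ha (fun u _ => bot_le)

omit [OrderBot Q] in
lemma filter_up_closed {F : Set Q} (hF : IsPFilter F) {a b : Q} (ha : a ∈ F) (hab : a ≤ b) :
    b ∈ F := by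
  refine hF.2 a ha a ha (fun w hw => ?_)
  exact le_trans (mem_lCone_pair.mp hw).1 hab

lemma filter_bot_univ {F : Set Q} (hF : IsPFilter F) (hb : ⊥ ∈ F) : F = Set.univ :=
  Set.eq_univ_of_forall fun z => filter_up_closed hF hb bot_le

lemma proper_iff {F : Set Q} (hF : IsPFilter F) : F ≠ Set.univ ↔ ⊥ ∉ F := by
  constructor
  · intro h hb; exact h (filter_bot_univ hF hb)
  · intro h he; exact h (he ▸ Set.mem_univ ⊥)

omit [OrderBot Q] in
lemma ici_lfilter (x : Q) : IsLFilter (Set.Ici x) := by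
  refine ⟨⟨⟨x, le_refl x⟩, ?_⟩, ?_⟩
  · intro a ha b hb z hz
    exact hz x (mem_lCone_pair.mpr ⟨ha, hb⟩)
  · intro a ha b hb
    exact ⟨x, mem_lCone_pair.mpr ⟨ha, hb⟩, le_refl x⟩

lemma exists_max_lfilter {x : Q} (hx : x ≠ ⊥) :
    ∃ F : Set Q, IsMaxLFilter F ∧ x ∈ F := by
  set S : Set (Set Q) := {F | IsLFilter F ∧ ⊥ ∉ F} with hS
  have hIci : Set.Ici x ∈ S := ⟨ici_lfilter x, fun h => hx (le_bot_iff.mp h)⟩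
  have hZ : ∀ c ⊆ S, IsChain (· ⊆ ·) c → c.Nonempty → ∃ ub ∈ S, ∀ s ∈ c, s ⊆ ub := by
    intro c hcS hchain hcne
    obtain ⟨F0, hF0⟩ := hcne
    refine ⟨⋃₀ c, ⟨⟨⟨?_, ?_⟩, ?_⟩, ?_⟩, fun s hs => Set.subset_sUnion_of_mem hs⟩
    · obtain ⟨a, ha⟩ := (hcS hF0).1.1.1
      exact ⟨a, F0, hF0, ha⟩
    · rintro a ⟨Fa, hFa, haF⟩ b ⟨Fb, hFb, hbF⟩ z hz
      rcases hchain.total hFa hFb with h | h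
      · exact Set.subset_sUnion_of_mem hFb ((hcS hFb).1.1.2 a (h haF) b hbF hz)
      · exact Set.subset_sUnion_of_mem hFa ((hcS hFa).1.1.2 a haF b (h hbF) hz)
    · rintro a ⟨Fa, hFa, haF⟩ b ⟨Fb, hFb, hbF⟩
      rcases hchain.total hFa hFb with h | h
      · obtain ⟨z, hz1, hz2⟩ := (hcS hFb).1.2 a (h haF) b hbF
        exact ⟨z, hz1, Set.subset_sUnion_of_mem hFb hz2⟩
      · obtain ⟨z, hz1, hz2⟩ := (hcS hFa).1.2 a haF b (h hbF)
        exact ⟨z, hz1, Set.subset_sUnion_of_mem hFa hz2⟩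
    · rintro ⟨F, hF, hbF⟩
      exact (hcS hF).2 hbF
  obtain ⟨m, hxm, hm⟩ := zorn_subset_nonempty S hZ _ hIci
  have hmL : IsLFilter m := hm.1.1
  have hmne : m ≠ Set.univ := (proper_iff hmL.1).mpr hm.1.2
  refine ⟨m, ⟨hmL, hmne, ?_⟩, hxm (le_refl x)⟩
  intro G hG hGne hmG
  exact hmG.antisymm (hm.2 ⟨hG, ((proper_iff hG.1).mp hGne)⟩ hmG)

lemma compl_prime {F : Set Q} (hL : IsLFilter F) (hP : IsPrimeFilter F) :
    IsPrimeIdeal Fᶜ := by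
  have hbot : ⊥ ∉ F := (proper_iff hL.1).mp hP.2.1
  refine ⟨⟨⟨⊥, hbot⟩, ?_⟩, ?_, ?_⟩
  · intro a ha b hb z hz
    intro hzF
    have hsub : uCone {a, b} ⊆ F := by
      intro u hu
      exact filter_up_closed hL.1 hzF (hz u hu)
    rcases hP.2.2 a b hsub with h | h
    · exact ha h
    · exact hb h
  · intro h
    obtain ⟨a, ha⟩ := hL.1.1
    have : a ∈ Fᶜ := h ▸ Set.mem_univ a
    exact this ha
  · intro u v huv
    by_contra h
    push_neg at h
    simp only [Set.mem_compl_iff, not_not] at h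
    obtain ⟨z, hz1, hz2⟩ := hL.2 u h.1 v h.2
    exact huv hz1 hz2

lemma exists_min_prime {P : Set Q} (hP : IsPrimeIdeal P) :
    ∃ M : Set Q, IsMinPrimeIdeal M ∧ M ⊆ P := by
  set S : Set (Set Q) := {P' | IsPrimeIdeal P' ∧ P' ⊆ P} with hS
  have hZ : ∀ c ⊆ S, IsChain (· ⊆ ·) c → c.Nonempty → ∃ lb ∈ S, ∀ s ∈ c, lb ⊆ s := by
    intro c hcS hchain hcne
    obtain ⟨F0, hF0⟩ := hcne
    refine ⟨⋂₀ c, ⟨⟨⟨⟨⊥, ?_⟩, ?_⟩, ?_, ?_⟩, ?_⟩, fun s hs => Set.sInter_subset_of_mem hs⟩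
    · intro s hs; exact bot_mem_ideal (hcS hs).1.1
    · intro a ha b hb z hz s hs
      exact (hcS hs).1.1.2 a (ha s hs) b (hb s hs) hz
    · intro h
      have : F0 = Set.univ :=
        Set.eq_univ_of_univ_subset (h ▸ Set.sInter_subset_of_mem hF0)
      exact (hcS hF0).1.2.1 this
    · intro u v huv
      by_contra h
      push_neg at h
      obtain ⟨⟨s1, hs1, hus1⟩, ⟨s2, hs2, hvs2⟩⟩ :
          (∃ s ∈ c, u ∉ s) ∧ (∃ s ∈ c, v ∉ s) := by
        constructor
        · by_contra hc; push_neg at hc; exact h.1 (fun s hs => hc s hs)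
        · by_contra hc; push_neg at hc; exact h.2 (fun s hs => hc s hs)
      rcases hchain.total hs1 hs2 with hle | hle
      · rcases (hcS hs1).1.2.2 u v (fun z hz => huv hz s1 hs1) with hh | hh
        · exact hus1 hh
        · exact hvs2 (hle hh)
      · rcases (hcS hs2).1.2.2 u v (fun z hz => huv hz s2 hs2) with hh | hh
        · exact hus1 (hle hh)
        · exact hvs2 hh
    · exact (Set.sInter_subset_of_mem hF0).trans (hcS hF0).2
  obtain ⟨m, hmP, hm⟩ := zorn_superset_nonempty S hZ P ⟨hP, subset_rfl⟩
  refine ⟨m, ⟨hm.1.1, ?_⟩, hmP⟩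
  intro P' hP' hP'm
  exact hP'm.antisymm (hm.2 ⟨hP', hP'm.trans hmP⟩ hP'm)

lemma bot_mem_prime {P : Set Q} (hP : IsPrimeIdeal P) : ⊥ ∈ P := bot_mem_ideal hP.1

end Aux


open ZD in
/-- For a poset `Q` in `P^ℓ_MFP`, the intersection of all minimal prime
ideals is `{0}`, and consequently the intersection of all prime ideals is `{0}`. -/
theorem stmt_0 (Q : Type*) [PartialOrder Q] [OrderBot Q] (hQ : MemPMFPl Q) :
    ⋂₀ {P : Set Q | IsMinPrimeIdeal P} = ({⊥} : Set Q) ∧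
    ⋂₀ {P : Set Q | IsPrimeIdeal P} = ({⊥} : Set Q) := by
  have key : ∀ x : Q, x ≠ ⊥ → ∃ M : Set Q, IsMinPrimeIdeal M ∧ x ∉ M := by
    intro x hx
    obtain ⟨F, hF, hxF⟩ := exists_max_lfilter hx
    have hMax : IsMaxFilter F := hQ.2 F hF
    have hPrime : IsPrimeFilter F := hQ.1 F hMax
    have hPI : IsPrimeIdeal Fᶜ := compl_prime hF.1 hPrime
    obtain ⟨M, hM, hMsub⟩ := exists_min_prime hPI
    exact ⟨M, hM, fun hxM => (hMsub hxM) hxF⟩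
  have h1 : ⋂₀ {P : Set Q | IsMinPrimeIdeal P} = ({⊥} : Set Q) := by
    apply Set.eq_singleton_iff_unique_mem.mpr
    constructor
    · intro P hP; exact bot_mem_prime hP.1
    · intro y hy
      by_contra hyb
      obtain ⟨M, hM, hxM⟩ := key y hyb
      exact hxM (hy M hM)
  refine ⟨h1, ?_⟩
  apply Set.eq_singleton_iff_unique_mem.mpr
  constructor
  · intro P hP; exact bot_mem_prime hP
  · intro y hy
    by_contra hyb
    obtain ⟨M, hM, hxM⟩ := key y hyb
    exact hxM (hy M hM.1)
end

section
/- Let L be a 0-distributive lattice with least element 0. Then the zero-divisor graph Γ(L) is complemented if and only if Min(L), the space of minimal prime ideals of L with the subspace topology inherited from the Zariski topology on Spec(L), is compact. -/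
/-!
In a `0`-distributive lattice the complements of the maximal proper filters are exactly the
minimal prime ideals, and `x` lies in a minimal prime `P` iff `x ⊓ z = 0` for some `z ∉ P`.
Both sides of the theorem are then equivalent to: every `x ≠ 0` has a quasi-complement `y`,
i.e. `x ⊓ y = 0` and only `0` annihilates both `x` and `y`, or equivalently no minimal prime
contains both. For `Γ(L)` this is a direct translation. On `Min(L)` a quasi-complement `y` of
`x` makes `V(x) ∩ Min(L) = D(y) ∩ Min(L)`. If `Min(L)` is compact, its closed subset
`V(x) ∩ Min(L)` is covered by finitely many `D(z)` with `x ⊓ z = 0`, and their join is a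
quasi-complement. Conversely, if a cover of `Min(L)` by sets `D(z)` had no finite subcover, the
quasi-complements of the `z` would generate a proper filter, and a minimal prime disjoint from
it would contain every `z`.
-/

namespace ZDL

variable (L : Type*) [Lattice L] [OrderBot L]

/-- A lattice with least element `0` is `0`-distributive if `x ⊓ y = 0` and
`x ⊓ z = 0` imply `x ⊓ (y ⊔ z) = 0`. -/
def ZeroDistributive : Prop :=
  ∀ x y z : L, x ⊓ y = ⊥ → x ⊓ z = ⊥ → x ⊓ (y ⊔ z) = ⊥

variable {L} in
/-- A lattice ideal: nonempty, downward closed, and closed under joins. -/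
def IsLatIdeal (I : Set L) : Prop :=
  I.Nonempty ∧ IsLowerSet I ∧ ∀ a ∈ I, ∀ b ∈ I, a ⊔ b ∈ I

variable {L} in
/-- A prime lattice ideal: proper and `x ⊓ y ∈ P` implies `x ∈ P` or `y ∈ P`. -/
def IsPrimeLatIdeal (P : Set L) : Prop :=
  IsLatIdeal P ∧ P ≠ Set.univ ∧ ∀ x y : L, x ⊓ y ∈ P → x ∈ P ∨ y ∈ P

variable {L} in
/-- The annihilator `x^⊥ = {y : x ⊓ y = 0}` of an element. -/
def ann (x : L) : Set L := {y | x ⊓ y = ⊥}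

variable {L} in
/-- The annihilator `A^⊥` of a subset. -/
def annSet (A : Set L) : Set L := {y | ∀ a ∈ A, a ⊓ y = ⊥}

variable {L} in
/-- The smallest lattice ideal `(x] ∨ (y]` containing `(x]` and `(y]`. -/
def idealSup (x y : L) : Set L :=
  ⋂₀ {I : Set L | IsLatIdeal I ∧ Set.Iic x ⊆ I ∧ Set.Iic y ⊆ I}

/-- A lattice is quasi-complemented if for every `x` there is `y ≠ x` with
`x ⊓ y = 0` and `((x] ∨ (y])^⊥ = {0}`. -/
def QuasiComplemented : Prop :=
  ∀ x : L, ∃ y : L, y ≠ x ∧ x ⊓ y = ⊥ ∧ annSet (idealSup x y) = {⊥}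

variable {L} in
/-- Adjacency in the zero-divisor graph `Γ(L)`. -/
def zdAdj (x y : L) : Prop := x ≠ y ∧ x ≠ ⊥ ∧ y ≠ ⊥ ∧ x ⊓ y = ⊥

variable {L} in
/-- Vertices of `Γ(L)`: the nonzero zero-divisors. -/
def IsZDVertex (x : L) : Prop := x ≠ ⊥ ∧ ∃ y : L, y ≠ ⊥ ∧ x ⊓ y = ⊥

/-- The zero-divisor graph `Γ(L)` is complemented: every vertex `a` has an adjacent
vertex `b` such that no vertex is adjacent to both `a` and `b`. -/
def GammaComplemented : Prop :=
  ∀ x : L, IsZDVertex x →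
    ∃ y : L, zdAdj x y ∧ ∀ c : L, ¬ (zdAdj c x ∧ zdAdj c y)

/-- The prime spectrum of a lattice. -/
def Spec := {P : Set L // IsPrimeLatIdeal P}

/-- The Zariski topology on `Spec L`, whose closed sets are the sets
`V(I) = {P : I ⊆ P}` for lattice ideals `I`. -/
instance : TopologicalSpace (Spec L) :=
  TopologicalSpace.generateFrom
    {U : Set (Spec L) | ∃ I : Set L, IsLatIdeal I ∧ U = {P : Spec L | ¬ I ⊆ P.1}}

/-- `Min(L)`: the minimal prime ideals, as a subset of `Spec L`. -/
def MinSpec : Set (Spec L) :=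
  {P : Spec L | ∀ P' : Set L, IsPrimeLatIdeal P' → P' ⊆ P.1 → P' = P.1}

end ZDL

namespace ZDL

variable {L : Type*} [Lattice L] {a b w x y : L} {F M P : Set L}

namespace IsPrimeLatIdeal

lemma mem_of_le (hP : IsPrimeLatIdeal P) (hab : a ≤ b) (hb : b ∈ P) : a ∈ P := hP.1.2.1 hab hb

lemma mem_or_mem (hP : IsPrimeLatIdeal P) (hab : a ⊓ b ∈ P) : a ∈ P ∨ b ∈ P := hP.2.2 a b hab

end IsPrimeLatIdeal

def basicOpen (z : L) : Set (Spec L) := {P | z ∉ P.1}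

lemma isOpen_basicOpen (z : L) : IsOpen (basicOpen z) := by
  refine TopologicalSpace.isOpen_generateFrom_of_mem
    ⟨Set.Iic z, ⟨⟨z, le_rfl⟩, isLowerSet_Iic z, fun _ ha _ hb ↦ sup_le ha hb⟩, ?_⟩
  ext P
  exact ⟨fun hz h ↦ hz (h le_rfl), fun h hz ↦ h (P.2.1.2.1.Iic_subset hz)⟩

lemma mem_minSpec_iff {P : Spec L} : P ∈ MinSpec L ↔ Minimal IsPrimeLatIdeal P.1 :=
  ⟨fun h ↦ ⟨P.2, fun Q hQ hQP ↦ (h Q hQ hQP).ge⟩, fun h _ hQ hQP ↦ h.eq_of_le hQ hQP⟩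

lemma isCompact_minSpec_of_finite_cover
    (hfin : ∀ Z : Set L, (∀ P, Minimal IsPrimeLatIdeal P → ∃ z ∈ Z, z ∉ P) →
      ∃ T ⊆ Z, T.Finite ∧ ∀ P, Minimal IsPrimeLatIdeal P → ∃ z ∈ T, z ∉ P) :
    IsCompact (MinSpec L) := by
  refine isCompact_generateFrom rfl fun 𝒰 h𝒰 hcover ↦ ?_
  have hbasic : ∀ P, Minimal IsPrimeLatIdeal P → ∃ z, (∃ U ∈ 𝒰, basicOpen z ⊆ U) ∧ z ∉ P := by
    intro P hP
    obtain ⟨U, hU, hPU⟩ := hcover (a := ⟨P, hP.1⟩) (mem_minSpec_iff.2 hP)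
    obtain ⟨I, -, rfl⟩ := h𝒰 hU
    obtain ⟨z, hzI, hzP⟩ := Set.not_subset.1 hPU
    exact ⟨z, ⟨_, hU, fun Q hQ hIQ ↦ hQ (hIQ hzI)⟩, hzP⟩
  obtain ⟨T, hTZ, hT, hTcover⟩ := hfin {z | ∃ U ∈ 𝒰, basicOpen z ⊆ U} hbasic
  have hTU : ∀ z ∈ T, ∃ U ∈ 𝒰, basicOpen z ⊆ U := fun z hz ↦ hTZ hz
  choose! U hU hzU using hTU
  refine ⟨U '' T, Set.image_subset_iff.2 hU, hT.image U, fun P hP ↦ ?_⟩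
  obtain ⟨z, hzT, hzP⟩ := hTcover P.1 (mem_minSpec_iff.1 hP)
  exact ⟨U z, Set.mem_image_of_mem U hzT, hzU z hzT hzP⟩

variable [OrderBot L]

namespace IsPrimeLatIdeal

lemma bot_mem (hP : IsPrimeLatIdeal P) : ⊥ ∈ P :=
  let ⟨_, ha⟩ := hP.1.1
  hP.mem_of_le bot_le ha

lemma mem_or_mem_of_inf_eq_bot (hP : IsPrimeLatIdeal P) (hab : a ⊓ b = ⊥) : a ∈ P ∨ b ∈ P :=
  hP.mem_or_mem (hab ▸ hP.bot_mem)

end IsPrimeLatIdeal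

lemma ZeroDistributive.inf_finsetSup_eq_bot (h0 : ZeroDistributive L) {ι : Type*}
    {t : Finset ι} {f : ι → L} (ht : ∀ i ∈ t, x ⊓ f i = ⊥) : x ⊓ t.sup f = ⊥ :=
  Finset.sup_induction (p := fun a ↦ x ⊓ a = ⊥) (inf_bot_eq x) (fun _ ha _ hb ↦ h0 _ _ _ ha hb) ht

structure IsProperFilter (F : Set L) : Prop where
  nonempty : F.Nonempty
  isUpperSet : IsUpperSet F
  infClosed : InfClosed F
  bot_notMem : ⊥ ∉ F

lemma isProperFilter_upperClosure {S : Set L} (hS : InfClosed S) (hne : S.Nonempty)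
    (hbot : ⊥ ∉ S) : IsProperFilter (upperClosure S : Set L) where
  nonempty := hne.mono subset_upperClosure
  isUpperSet := (upperClosure S).upper
  infClosed := by
    rintro _ ⟨a, ha, hax⟩ _ ⟨b, hb, hby⟩
    exact ⟨a ⊓ b, hS ha hb, inf_le_inf hax hby⟩
  bot_notMem := by
    rintro ⟨a, ha, hab⟩
    exact hbot (le_bot_iff.1 hab ▸ ha)

lemma IsPrimeLatIdeal.isProperFilter_compl (hP : IsPrimeLatIdeal P) : IsProperFilter Pᶜ where
  nonempty := Set.nonempty_compl.2 hP.2.1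
  isUpperSet := fun _ _ hab hb ha ↦ hb (hP.mem_of_le hab ha)
  infClosed := fun _ ha _ hb hab ↦ (hP.mem_or_mem hab).elim ha hb
  bot_notMem := fun h ↦ h hP.bot_mem

lemma IsProperFilter.exists_le_maximal (hF : IsProperFilter F) :
    ∃ M, F ⊆ M ∧ Maximal IsProperFilter M := by
  refine zorn_subset_nonempty {F | IsProperFilter F} (fun c hc hchain ⟨G, hG⟩ ↦ ?_) F hF
  refine ⟨⋃₀ c, ⟨?_, ?_, ?_, ?_⟩, fun _ ↦ Set.subset_sUnion_of_mem⟩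
  · exact (hc hG).nonempty.mono (Set.subset_sUnion_of_mem hG)
  · exact isUpperSet_sUnion fun G hG ↦ (hc hG).isUpperSet
  · rintro a ⟨G₁, hG₁, ha⟩ b ⟨G₂, hG₂, hb⟩
    rcases hchain.total hG₁ hG₂ with h | h
    · exact ⟨G₂, hG₂, (hc hG₂).infClosed (h ha) hb⟩
    · exact ⟨G₁, hG₁, (hc hG₁).infClosed ha (h hb)⟩
  · rintro ⟨G, hG, hbot⟩
    exact (hc hG).bot_notMem hbot

/-- Otherwise `M` and `a` would generate a strictly larger proper filter. -/
lemma exists_inf_eq_bot_of_maximal (hM : Maximal IsProperFilter M) (ha : a ∉ M) :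
    ∃ m ∈ M, m ⊓ a = ⊥ := by
  by_contra! h
  have hG : IsProperFilter (upperClosure ((· ⊓ a) '' M) : Set L) := by
    refine isProperFilter_upperClosure ?_ (hM.1.nonempty.image _) fun ⟨m, hm, hbot⟩ ↦ h m hm hbot
    rintro _ ⟨m₁, hm₁, rfl⟩ _ ⟨m₂, hm₂, rfl⟩
    exact ⟨m₁ ⊓ m₂, hM.1.infClosed hm₁ hm₂, inf_inf_distrib_right m₁ m₂ a⟩
  have hMG : M ⊆ upperClosure ((· ⊓ a) '' M) := fun m hm ↦ ⟨m ⊓ a, ⟨m, hm, rfl⟩, inf_le_left⟩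
  obtain ⟨m, hm⟩ := hM.1.nonempty
  exact ha (hM.2 hG hMG ⟨m ⊓ a, ⟨m, hm, rfl⟩, inf_le_right⟩)

lemma isPrimeLatIdeal_compl_of_maximal (h0 : ZeroDistributive L)
    (hM : Maximal IsProperFilter M) : IsPrimeLatIdeal Mᶜ := by
  refine ⟨⟨⟨⊥, hM.1.bot_notMem⟩, fun _ _ hab hb ha ↦ hb (hM.1.isUpperSet hab ha), ?_⟩, ?_, ?_⟩
  · intro a ha b hb hab
    obtain ⟨m₁, hm₁, h₁⟩ := exists_inf_eq_bot_of_maximal hM ha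
    obtain ⟨m₂, hm₂, h₂⟩ := exists_inf_eq_bot_of_maximal hM hb
    have hm : m₁ ⊓ m₂ ∈ M := hM.1.infClosed hm₁ hm₂
    have hbot : (m₁ ⊓ m₂) ⊓ (a ⊔ b) = ⊥ :=
      h0 _ _ _ (le_bot_iff.1 (h₁ ▸ inf_le_inf_right a inf_le_left))
        (le_bot_iff.1 (h₂ ▸ inf_le_inf_right b inf_le_right))
    exact hM.1.bot_notMem (hbot ▸ hM.1.infClosed hm hab)
  · exact Set.compl_ne_univ.2 hM.1.nonempty
  · exact fun x y hxy ↦ not_and_or.1 fun h ↦ hxy (hM.1.infClosed h.1 h.2)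

lemma minimal_compl_of_maximal (h0 : ZeroDistributive L) (hM : Maximal IsProperFilter M) :
    Minimal IsPrimeLatIdeal Mᶜ :=
  ⟨isPrimeLatIdeal_compl_of_maximal h0 hM, fun _ hQ hQM ↦
    Set.compl_subset_comm.1 (hM.2 hQ.isProperFilter_compl (Set.subset_compl_comm.1 hQM))⟩

lemma maximal_compl_of_minimal (h0 : ZeroDistributive L) (hP : Minimal IsPrimeLatIdeal P) :
    Maximal IsProperFilter Pᶜ := by
  refine ⟨hP.1.isProperFilter_compl, fun G hG hPG ↦ ?_⟩
  obtain ⟨M, hGM, hM⟩ := hG.exists_le_maximal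
  have hPM : P ⊆ Mᶜ :=
    hP.2 (minimal_compl_of_maximal h0 hM).1 (Set.compl_subset_comm.1 (hPG.trans hGM))
  exact hGM.trans (Set.subset_compl_comm.1 hPM)

lemma exists_notMem_inf_eq_bot_of_minimal (h0 : ZeroDistributive L)
    (hP : Minimal IsPrimeLatIdeal P) (hx : x ∈ P) : ∃ z ∉ P, x ⊓ z = ⊥ := by
  obtain ⟨z, hz, hzx⟩ := exists_inf_eq_bot_of_maximal (maximal_compl_of_minimal h0 hP)
    (Set.notMem_compl_iff.2 hx)
  exact ⟨z, hz, inf_comm z x ▸ hzx⟩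

lemma exists_minimal_subset_compl (h0 : ZeroDistributive L) (hF : IsProperFilter F) :
    ∃ P, Minimal IsPrimeLatIdeal P ∧ F ⊆ Pᶜ := by
  obtain ⟨M, hFM, hM⟩ := hF.exists_le_maximal
  exact ⟨Mᶜ, minimal_compl_of_maximal h0 hM, (compl_compl M).symm ▸ hFM⟩

lemma exists_minimal_notMem (h0 : ZeroDistributive L) (hx : x ≠ ⊥) :
    ∃ P, Minimal IsPrimeLatIdeal P ∧ x ∉ P := by
  obtain ⟨P, hP, hxP⟩ := exists_minimal_subset_compl h0 <|
    isProperFilter_upperClosure infClosed_singleton (Set.singleton_nonempty x) hx.symm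
  exact ⟨P, hP, hxP (subset_upperClosure rfl)⟩

def IsQuasiCompl (x y : L) : Prop :=
  x ⊓ y = ⊥ ∧ ∀ c, c ⊓ x = ⊥ → c ⊓ y = ⊥ → c = ⊥

lemma IsQuasiCompl.sup_right (h0 : ZeroDistributive L) (h : IsQuasiCompl x y)
    (hw : x ⊓ w = ⊥) : IsQuasiCompl x (y ⊔ w) :=
  ⟨h0 _ _ _ h.1 hw, fun c hxc hyc ↦
    h.2 c hxc (le_bot_iff.1 (hyc ▸ inf_le_inf_left c le_sup_left))⟩

lemma isQuasiCompl_iff (h0 : ZeroDistributive L) :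
    IsQuasiCompl x y ↔ x ⊓ y = ⊥ ∧ ∀ P, Minimal IsPrimeLatIdeal P → x ∈ P → y ∉ P := by
  refine and_congr_right fun _ ↦ ⟨fun h P hP hxP hyP ↦ ?_, fun h c hxc hyc ↦ ?_⟩
  · obtain ⟨a, haP, hxa⟩ := exists_notMem_inf_eq_bot_of_minimal h0 hP hxP
    obtain ⟨b, hbP, hyb⟩ := exists_notMem_inf_eq_bot_of_minimal h0 hP hyP
    have hab : a ⊓ b = ⊥ :=
      h _ (le_bot_iff.1 ((inf_le_inf_right x inf_le_left).trans_eq ((inf_comm a x).trans hxa)))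
        (le_bot_iff.1 ((inf_le_inf_right y inf_le_right).trans_eq ((inf_comm b y).trans hyb)))
    exact (hP.1.mem_or_mem_of_inf_eq_bot hab).elim haP hbP
  · by_contra hc
    obtain ⟨P, hP, hcP⟩ := exists_minimal_notMem h0 hc
    have hxP := (hP.1.mem_or_mem_of_inf_eq_bot hxc).resolve_left hcP
    have hyP := (hP.1.mem_or_mem_of_inf_eq_bot hyc).resolve_left hcP
    exact h P hP hxP hyP

lemma zdAdj_iff : zdAdj x y ↔ x ≠ ⊥ ∧ y ≠ ⊥ ∧ x ⊓ y = ⊥ :=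
  ⟨fun h ↦ h.2, fun h ↦ ⟨fun hxy ↦ h.1 (by rw [← h.2.2, ← hxy, inf_idem]), h⟩⟩

/-- Non-zero-divisors have the quasi-complement `⊥`; for a vertex `x` with `x ⊓ w = ⊥`, enlarging
a quasi-complement `y` to `y ⊔ w` makes it a vertex. -/
lemma gammaComplemented_iff (h0 : ZeroDistributive L) :
    GammaComplemented L ↔ ∀ x : L, x ≠ ⊥ → ∃ y, IsQuasiCompl x y := by
  constructor
  · intro h x hx
    by_cases hv : ∃ w, w ≠ ⊥ ∧ x ⊓ w = ⊥
    · obtain ⟨y, hxy, hnc⟩ := h x ⟨hx, hv⟩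
      refine ⟨y, hxy.2.2.2, fun c hcx hcy ↦ by_contra fun hc ↦ hnc c ?_⟩
      exact ⟨zdAdj_iff.2 ⟨hc, hx, hcx⟩, zdAdj_iff.2 ⟨hc, hxy.2.2.1, hcy⟩⟩
    · push Not at hv
      exact ⟨⊥, inf_bot_eq x, fun c hcx _ ↦ by_contra fun hc ↦ hv c hc (inf_comm c x ▸ hcx)⟩
  · rintro h x ⟨hx, w, hw, hxw⟩
    obtain ⟨y, hy⟩ := h x hx
    have hyw := hy.sup_right h0 hxw
    refine ⟨y ⊔ w, zdAdj_iff.2 ⟨hx, fun h ↦ hw (le_bot_iff.1 (h ▸ le_sup_right)), hyw.1⟩, ?_⟩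
    rintro c ⟨hcx, hcyw⟩
    exact (zdAdj_iff.1 hcx).1 (hyw.2 c (zdAdj_iff.1 hcx).2.2 (zdAdj_iff.1 hcyw).2.2)

lemma exists_isQuasiCompl_of_isCompact (h0 : ZeroDistributive L) (hc : IsCompact (MinSpec L))
    (x : L) : ∃ y, IsQuasiCompl x y := by
  have hK : IsCompact (MinSpec L ∩ (basicOpen x)ᶜ) :=
    hc.inter_right (isOpen_basicOpen x).isClosed_compl
  have hcover : MinSpec L ∩ (basicOpen x)ᶜ ⊆ ⋃ z ∈ {z | x ⊓ z = ⊥}, basicOpen z := by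
    rintro P ⟨hP, hxP⟩
    obtain ⟨z, hzP, hxz⟩ :=
      exists_notMem_inf_eq_bot_of_minimal h0 (mem_minSpec_iff.1 hP) (not_not.1 hxP)
    exact Set.mem_biUnion hxz hzP
  obtain ⟨t, htx, ht, htcover⟩ :=
    hK.elim_finite_subcover_image (fun z _ ↦ isOpen_basicOpen z) hcover
  refine ⟨ht.toFinset.sup id, (isQuasiCompl_iff h0).2
    ⟨h0.inf_finsetSup_eq_bot fun z hz ↦ htx (ht.mem_toFinset.1 hz), fun P hP hxP hyP ↦ ?_⟩⟩
  obtain ⟨z, hzt, hzP⟩ :=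
    Set.mem_iUnion₂.1 (htcover (a := ⟨P, hP.1⟩) ⟨mem_minSpec_iff.2 hP, not_not.2 hxP⟩)
  exact hzP (hP.1.mem_of_le (Finset.le_sup (f := id) (ht.mem_toFinset.2 hzt)) hyP)

/-- If no finite part of `Z` escapes every minimal prime, the elements `w` that escape every
minimal prime containing some finite part of `Z` form a proper filter; it contains the
quasi-complements of the elements of `Z`, so a minimal prime disjoint from it contains `Z`. -/
lemma exists_finite_cover_of_isQuasiCompl (h0 : ZeroDistributive L)
    (hq : ∀ x : L, x ≠ ⊥ → ∃ y, IsQuasiCompl x y) {Z : Set L}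
    (hZ : ∀ P, Minimal IsPrimeLatIdeal P → ∃ z ∈ Z, z ∉ P) :
    ∃ T ⊆ Z, T.Finite ∧ ∀ P, Minimal IsPrimeLatIdeal P → ∃ z ∈ T, z ∉ P := by
  by_contra! hfin
  set F := {w | ∃ T ⊆ Z, T.Finite ∧ ∀ P, Minimal IsPrimeLatIdeal P → T ⊆ P → w ∉ P}
  have hqZ : ∀ z ∈ Z, z ≠ ⊥ → ∃ y, z ⊓ y = ⊥ ∧ y ∈ F := by
    intro z hz hzbot
    obtain ⟨y, hy⟩ := hq z hzbot
    obtain ⟨hzy, hyP⟩ := (isQuasiCompl_iff h0).1 hy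
    exact ⟨y, hzy, {z}, Set.singleton_subset_iff.2 hz, Set.finite_singleton z,
      fun P hP hzP ↦ hyP P hP (hzP rfl)⟩
  have hF : IsProperFilter F := by
    refine ⟨?_, ?_, ?_, ?_⟩
    · obtain ⟨P, hP, -⟩ := hfin ∅ (Set.empty_subset Z) Set.finite_empty
      obtain ⟨z, hzZ, hzP⟩ := hZ P hP
      obtain ⟨y, -, hy⟩ := hqZ z hzZ fun h ↦ hzP (h ▸ hP.1.bot_mem)
      exact ⟨y, hy⟩
    · rintro a b hab ⟨T, hTZ, hT, haP⟩
      exact ⟨T, hTZ, hT, fun P hP hTP hbP ↦ haP P hP hTP (hP.1.mem_of_le hab hbP)⟩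
    · rintro a ⟨T₁, hT₁Z, hT₁, haP⟩ b ⟨T₂, hT₂Z, hT₂, hbP⟩
      refine ⟨T₁ ∪ T₂, Set.union_subset hT₁Z hT₂Z, hT₁.union hT₂, fun P hP hTP habP ↦ ?_⟩
      rcases hP.1.mem_or_mem habP with ha | hb
      · exact haP P hP (Set.subset_union_left.trans hTP) ha
      · exact hbP P hP (Set.subset_union_right.trans hTP) hb
    · rintro ⟨T, hTZ, hT, hbotP⟩
      obtain ⟨P, hP, hTP⟩ := hfin T hTZ hT
      exact hbotP P hP hTP hP.1.bot_mem
  obtain ⟨P, hP, hFP⟩ := exists_minimal_subset_compl h0 hF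
  obtain ⟨z, hzZ, hzP⟩ := hZ P hP
  obtain ⟨y, hzy, hy⟩ := hqZ z hzZ fun h ↦ hzP (h ▸ hP.1.bot_mem)
  exact (hP.1.mem_or_mem_of_inf_eq_bot hzy).elim hzP (hFP hy)

lemma isCompact_minSpec_iff (h0 : ZeroDistributive L) :
    IsCompact (MinSpec L) ↔ ∀ x : L, x ≠ ⊥ → ∃ y, IsQuasiCompl x y :=
  ⟨fun hc x _ ↦ exists_isQuasiCompl_of_isCompact h0 hc x, fun hq ↦
    isCompact_minSpec_of_finite_cover fun _ ↦ exists_finite_cover_of_isQuasiCompl h0 hq⟩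

end ZDL

open ZDL in
/-- For a `0`-distributive lattice `L`, the zero-divisor graph `Γ(L)`
is complemented iff `Min(L)`, with the subspace topology from the Zariski topology
on `Spec L`, is compact. -/
theorem stmt_14 (L : Type*) [Lattice L] [OrderBot L] (h0 : ZeroDistributive L) :
    GammaComplemented L ↔ IsCompact (MinSpec L) :=
  (gammaComplemented_iff h0).trans (isCompact_minSpec_iff h0).symm
end

section
/- Let R be a commutative Artinian ring with identity. Then the comaximal ideal graph CIG(R) is a complemented graph, and consequently a uniquely complemented graph. -/
namespace CIG

variable (R : Type*) [CommRing R]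

variable {R} in
/-- Vertices of the comaximal ideal graph `CIG(R)`: proper ideals not contained in
the Jacobson radical `J(R)`. -/
def IsVertex (I : Ideal R) : Prop :=
  I ≠ ⊤ ∧ ¬ I ≤ (⊥ : Ideal R).jacobson

variable {R} in
/-- Adjacency in `CIG(R)`: distinct vertices `I`, `J` with `I + J = R`. -/
def Adj (I J : Ideal R) : Prop :=
  I ≠ J ∧ IsVertex I ∧ IsVertex J ∧ I ⊔ J = ⊤

variable {R} in
/-- `J` is a complement of `I` in `CIG(R)`: they are adjacent and no vertex is
adjacent to both. -/
def IsComplementOf (I J : Ideal R) : Prop :=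
  Adj I J ∧ ∀ K : Ideal R, ¬ (Adj K I ∧ Adj K J)

/-- `CIG(R)` is complemented. -/
def Complemented : Prop :=
  ∀ I : Ideal R, IsVertex I → ∃ J : Ideal R, IsComplementOf I J

/-- `CIG(R)` is uniquely complemented. -/
def UniquelyComplemented : Prop :=
  Complemented R ∧
    ∀ I J K : Ideal R, IsComplementOf I J → IsComplementOf I K →
      ∀ M : Ideal R, (Adj M J ↔ Adj M K)

end CIG

/-!
Every maximal ideal `m` is a vertex as soon as some vertex `I` avoids it, and then `m` is adjacent
to `I`. Hence `J` is a complement of `I` exactly when every maximal ideal contains exactly one of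
`I` and `J`; the neighbours of such a `J` are then the vertices all of whose maximal overideals
contain `I`, which does not depend on `J`. An Artinian ring has finitely many maximal ideals, so
the intersection of those not containing `I` is comaximal with `I` and is a complement of it.
-/

namespace Ideal

variable {R : Type*} [CommRing R]

theorem IsMaximal.sup_eq_top_of_not_le {m I : Ideal R} (hm : m.IsMaximal) (h : ¬ I ≤ m) :
    m ⊔ I = ⊤ :=
  hm.out.2 _ (lt_of_le_of_ne le_sup_left fun e => h (e ▸ le_sup_right))

theorem sup_eq_top_iff_forall_isMaximal {I J : Ideal R} :
    I ⊔ J = ⊤ ↔ ∀ m : Ideal R, m.IsMaximal → I ≤ m → ¬ J ≤ m := by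
  constructor
  · intro h m hm hIm hJm
    exact hm.ne_top (top_le_iff.mp (h ▸ sup_le hIm hJm))
  · intro h
    by_contra hne
    obtain ⟨m, hm, hle⟩ := exists_le_maximal _ hne
    exact h m hm (le_sup_left.trans hle) (le_sup_right.trans hle)

theorem le_jacobson_bot_iff {I : Ideal R} :
    I ≤ jacobson ⊥ ↔ ∀ m : Ideal R, m.IsMaximal → I ≤ m := by
  simp only [jacobson, le_sInf_iff, Set.mem_ofPred_eq, bot_le, true_and]

theorem sup_sInf_eq_top {I : Ideal R} {S : Set (Ideal R)} (hS : S.Finite)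
    (h : ∀ m ∈ S, I ⊔ m = ⊤) : I ⊔ sInf S = ⊤ := by
  rw [sInf_eq_iInf, ← hS.coe_toFinset]
  exact sup_iInf_eq_top fun m hm => h m (hS.mem_toFinset.mp hm)

end Ideal

namespace CIG

open Ideal

variable {R : Type*} [CommRing R] {I J M m : Ideal R}

theorem isVertex_iff : IsVertex I ↔ I ≠ ⊤ ∧ ∃ m : Ideal R, m.IsMaximal ∧ ¬ I ≤ m := by
  simp only [IsVertex, le_jacobson_bot_iff, not_forall, exists_prop]

theorem adj_iff : Adj I J ↔ IsVertex I ∧ IsVertex J ∧ I ⊔ J = ⊤ := by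
  refine ⟨fun h => h.2, fun ⟨hI, hJ, hIJ⟩ => ⟨?_, hI, hJ, hIJ⟩⟩
  rintro rfl
  exact hI.1 (by rwa [sup_idem] at hIJ)

theorem isVertex_of_isMaximal (hI : IsVertex I) (hm : m.IsMaximal) (hIm : ¬ I ≤ m) :
    IsVertex m := by
  refine isVertex_iff.mpr ⟨hm.ne_top, ?_⟩
  obtain ⟨m', hm', hIm'⟩ := exists_le_maximal I hI.1
  refine ⟨m', hm', fun hmm' => hIm ?_⟩
  rwa [hm.eq_of_le hm'.ne_top hmm']

/-- A maximal ideal avoiding both `I` and `J` would be a common neighbour. -/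
theorem IsComplementOf.le_or_le (h : IsComplementOf I J) (hm : m.IsMaximal) :
    I ≤ m ∨ J ≤ m := by
  by_contra! hIJ
  have hmv : IsVertex m := isVertex_of_isMaximal h.1.2.1 hm hIJ.1
  exact h.2 m ⟨adj_iff.mpr ⟨hmv, h.1.2.1, hm.sup_eq_top_of_not_le hIJ.1⟩,
    adj_iff.mpr ⟨hmv, h.1.2.2.1, hm.sup_eq_top_of_not_le hIJ.2⟩⟩

theorem IsComplementOf.le_iff_not_le (h : IsComplementOf I J) (hm : m.IsMaximal) :
    I ≤ m ↔ ¬ J ≤ m :=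
  ⟨sup_eq_top_iff_forall_isMaximal.mp h.1.2.2.2 m hm, (h.le_or_le hm).resolve_right⟩

theorem IsComplementOf.adj_iff (h : IsComplementOf I J) :
    Adj M J ↔ IsVertex M ∧ ∀ m : Ideal R, m.IsMaximal → M ≤ m → I ≤ m := by
  rw [CIG.adj_iff, sup_eq_top_iff_forall_isMaximal]
  refine and_congr_right fun _ => (and_iff_right h.1.2.2.1).trans <|
    forall_congr' fun m => imp_congr_right fun hm => ?_
  rw [h.le_iff_not_le hm]

theorem uniquelyComplemented_of_complemented (h : Complemented R) : UniquelyComplemented R :=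
  ⟨h, fun _ _ _ hJ hK M => by rw [hJ.adj_iff, hK.adj_iff]⟩

def canonicalComplement (I : Ideal R) : Ideal R :=
  sInf {m | m.IsMaximal ∧ ¬ I ≤ m}

theorem canonicalComplement_le (hm : m.IsMaximal) (hIm : ¬ I ≤ m) :
    canonicalComplement I ≤ m :=
  sInf_le ⟨hm, hIm⟩

section FiniteMaximal

variable (hfin : {m : Ideal R | m.IsMaximal}.Finite)
include hfin

theorem sup_canonicalComplement : I ⊔ canonicalComplement I = ⊤ :=
  sup_sInf_eq_top (hfin.subset fun _ hm => hm.1) fun m hm =>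
    sup_comm I m ▸ hm.1.sup_eq_top_of_not_le hm.2

theorem isVertex_canonicalComplement (hI : IsVertex I) : IsVertex (canonicalComplement I) := by
  obtain ⟨-, m, hm, hIm⟩ := isVertex_iff.mp hI
  obtain ⟨m₀, hm₀, hIm₀⟩ := exists_le_maximal I hI.1
  refine isVertex_iff.mpr ⟨fun htop => hm.ne_top ?_, m₀, hm₀, ?_⟩
  · exact top_le_iff.mp (htop ▸ canonicalComplement_le hm hIm)
  · exact sup_eq_top_iff_forall_isMaximal.mp (sup_canonicalComplement hfin) m₀ hm₀ hIm₀

theorem isComplementOf_canonicalComplement (hI : IsVertex I) :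
    IsComplementOf I (canonicalComplement I) := by
  refine ⟨adj_iff.mpr ⟨hI, isVertex_canonicalComplement hfin hI, sup_canonicalComplement hfin⟩, ?_⟩
  rintro K ⟨hKI, hKJ⟩
  obtain ⟨hK, -, hKI⟩ := adj_iff.mp hKI
  obtain ⟨-, -, hKJ⟩ := adj_iff.mp hKJ
  obtain ⟨m, hm, hKm⟩ := exists_le_maximal K hK.1
  by_cases hIm : I ≤ m
  · exact sup_eq_top_iff_forall_isMaximal.mp hKI m hm hKm hIm
  · exact sup_eq_top_iff_forall_isMaximal.mp hKJ m hm hKm (canonicalComplement_le hm hIm)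

theorem complemented_of_finite_isMaximal : Complemented R :=
  fun _ hI => ⟨_, isComplementOf_canonicalComplement hfin hI⟩

end FiniteMaximal

end CIG

open CIG in
/-- For a commutative Artinian ring `R` with identity, the comaximal
ideal graph `CIG(R)` is complemented, and consequently uniquely complemented. -/
theorem stmt_15 (R : Type*) [CommRing R] [IsArtinianRing R] :
    Complemented R ∧ UniquelyComplemented R := by
  have h := complemented_of_finite_isMaximal (IsArtinianRing.setOfPred_isMaximal_finite R)
  exact ⟨h, uniquelyComplemented_of_complemented h⟩
end

section
/- Let R be a commutative Artinian ring with identity. Then the comaximal graph of R, i.e., the simple graph whose vertices are the non-unit elements of R not belonging to the Jacobson radical J(R), with distinct vertices x and y adjacent if and only if Rx + Ry = R, is a complemented graph, and consequently a uniquely complemented graph. -/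
namespace CG

variable (R : Type*) [CommRing R]

variable {R} in
/-- Vertices of the comaximal graph of `R`: non-unit elements of `R` not belonging
to the Jacobson radical `J(R)`. -/
def IsVertex (x : R) : Prop :=
  ¬ IsUnit x ∧ x ∉ (⊥ : Ideal R).jacobson

variable {R} in
/-- Adjacency in the comaximal graph: distinct vertices `x`, `y` with `Rx + Ry = R`. -/
def Adj (x y : R) : Prop :=
  x ≠ y ∧ IsVertex x ∧ IsVertex y ∧
    Ideal.span ({x} : Set R) ⊔ Ideal.span ({y} : Set R) = ⊤

variable {R} in
/-- `y` is a complement of `x`: they are adjacent and no vertex is adjacent to both. -/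
def IsComplementOf (x y : R) : Prop :=
  Adj x y ∧ ∀ c : R, ¬ (Adj c x ∧ Adj c y)

/-- The comaximal graph of `R` is complemented. -/
def Complemented : Prop :=
  ∀ x : R, IsVertex x → ∃ y : R, IsComplementOf x y

/-- The comaximal graph of `R` is uniquely complemented. -/
def UniquelyComplemented : Prop :=
  Complemented R ∧
    ∀ a b c : R, IsComplementOf a b → IsComplementOf a c →
      ∀ x : R, (Adj x b ↔ Adj x c)

end CG

/-!
Everything about a vertex `x` of the comaximal graph is read off from the set `V(x)` of maximal
ideals containing it: `x` is a vertex iff `∅ ≠ V(x) ≠ Max R`, and two vertices are adjacent iff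
their sets are disjoint. When `R` has finitely many maximal ideals (e.g. `R` Artinian), the
Chinese remainder theorem realises every subset of `Max R` as some `V(y)`. So `x` has a complement
`y` with `V(y) = V(x)ᶜ`, and conversely a complement `b` of `a` must have `V(b) = V(a)ᶜ`: a maximal
ideal `m` outside `V(a) ∪ V(b)` would give a common neighbour `c` with `V(c) = {m}`. Hence all
complements of `a` have the same neighbours.
-/

namespace CG

variable {R : Type*} [CommRing R]

def maxLocus (x : R) : Set (MaximalSpectrum R) := {m | x ∈ m.asIdeal}

@[simp]
lemma mem_maxLocus {x : R} {m : MaximalSpectrum R} : m ∈ maxLocus x ↔ x ∈ m.asIdeal := Iff.rfl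

lemma maxLocus_nonempty_iff {x : R} : (maxLocus x).Nonempty ↔ ¬IsUnit x := by
  constructor
  · rintro ⟨m, hxm⟩ hx
    exact m.isMaximal.ne_top (Ideal.eq_top_of_isUnit_mem _ hxm hx)
  · intro hx
    obtain ⟨m, hm, hxm⟩ := exists_max_ideal_of_mem_nonunits hx
    exact ⟨⟨m, hm⟩, hxm⟩

lemma maxLocus_eq_univ_iff {x : R} : maxLocus x = Set.univ ↔ x ∈ (⊥ : Ideal R).jacobson := by
  simp only [Set.eq_univ_iff_forall, mem_maxLocus, Ideal.jacobson, Ideal.mem_sInf,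
    Set.mem_ofPred_eq, bot_le, true_and]
  exact ⟨fun h m hm => h ⟨m, hm⟩, fun h m => h m.isMaximal⟩

lemma isVertex_iff {x : R} : IsVertex x ↔ (maxLocus x).Nonempty ∧ maxLocus x ≠ Set.univ := by
  rw [maxLocus_nonempty_iff, Ne, maxLocus_eq_univ_iff, IsVertex]

lemma span_singleton_sup_span_singleton_eq_top_iff {x y : R} :
    Ideal.span {x} ⊔ Ideal.span {y} = ⊤ ↔ Disjoint (maxLocus x) (maxLocus y) := by
  rw [Set.disjoint_left]
  constructor
  · intro h m hxm hym
    refine m.isMaximal.ne_top (top_le_iff.mp (h ▸ sup_le ?_ ?_)) <;>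
      rwa [Ideal.span_singleton_le_iff_mem]
  · intro h
    by_contra hne
    obtain ⟨m, hm, hle⟩ := Ideal.exists_le_maximal _ hne
    exact h (a := ⟨m, hm⟩) (hle (Ideal.mem_sup_left (Ideal.mem_span_singleton_self x)))
      (hle (Ideal.mem_sup_right (Ideal.mem_span_singleton_self y)))

-- `x ≠ y` is automatic: a vertex `x` has `V(x) ≠ ∅`, so `V(x)` is not disjoint from itself.
lemma adj_iff {x y : R} :
    Adj x y ↔ IsVertex x ∧ IsVertex y ∧ Disjoint (maxLocus x) (maxLocus y) := by
  rw [Adj, span_singleton_sup_span_singleton_eq_top_iff]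
  refine ⟨fun h => h.2, fun ⟨hx, hy, hxy⟩ => ⟨?_, hx, hy, hxy⟩⟩
  rintro rfl
  obtain ⟨m, hm⟩ := (isVertex_iff.mp hx).1
  exact Set.disjoint_left.mp hxy hm hm

lemma adj_congr_right {x b c : R} (h : maxLocus b = maxLocus c) : Adj x b ↔ Adj x c := by
  simp only [adj_iff, isVertex_iff, h]

lemma isComplementOf_of_maxLocus_eq_compl {x y : R} (hx : IsVertex x)
    (hy : maxLocus y = (maxLocus x)ᶜ) : IsComplementOf x y := by
  obtain ⟨hne, hnu⟩ := isVertex_iff.mp hx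
  have hyv : IsVertex y := by
    rw [isVertex_iff, hy, Set.nonempty_compl, Set.compl_ne_univ]
    exact ⟨hnu, hne⟩
  refine ⟨adj_iff.mpr ⟨hx, hyv, hy ▸ disjoint_compl_right⟩, fun c ⟨hcx, hcy⟩ => ?_⟩
  obtain ⟨hc, -, hcx⟩ := adj_iff.mp hcx
  obtain ⟨-, -, hcy⟩ := adj_iff.mp hcy
  rw [hy, Set.disjoint_compl_right_iff_subset] at hcy
  exact Set.nonempty_iff_ne_empty.mp (isVertex_iff.mp hc).1 (hcx.eq_bot_of_le hcy)

section Semilocal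

variable [Finite (MaximalSpectrum R)]

lemma exists_maxLocus_eq (S : Set (MaximalSpectrum R)) : ∃ y : R, maxLocus y = S := by
  classical
  obtain ⟨y, hy⟩ := Ideal.exists_forall_sub_mem_ideal
    (I := MaximalSpectrum.asIdeal) (fun _ _ => MaximalSpectrum.isCoprime_of_ne)
    (fun m => if m ∈ S then 0 else 1)
  refine ⟨y, Set.ext fun m => ?_⟩
  have hym := hy m
  by_cases hmS : m ∈ S
  · simpa [hmS] using hym
  · simp only [hmS, if_false] at hym
    simp only [mem_maxLocus, hmS, iff_false]
    intro hyS
    exact m.isMaximal.ne_top ((Ideal.eq_top_iff_one _).mpr (by simpa using sub_mem hyS hym))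

theorem complemented : Complemented R := fun x hx =>
  let ⟨y, hy⟩ := exists_maxLocus_eq (maxLocus x)ᶜ
  ⟨y, isComplementOf_of_maxLocus_eq_compl hx hy⟩

lemma maxLocus_eq_compl_of_isComplementOf {a b : R} (h : IsComplementOf a b) :
    maxLocus b = (maxLocus a)ᶜ := by
  obtain ⟨hab, hno⟩ := h
  obtain ⟨ha, hb, hdisj⟩ := adj_iff.mp hab
  refine le_antisymm hdisj.symm.subset_compl_right fun m hma => ?_
  by_contra hmb
  obtain ⟨c, hc⟩ := exists_maxLocus_eq {m}
  have hcv : IsVertex c := by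
    obtain ⟨n, hn⟩ := (isVertex_iff.mp ha).1
    refine isVertex_iff.mpr ⟨hc ▸ Set.singleton_nonempty m, fun hu => hma ?_⟩
    have hnm : n = m := by rw [← Set.mem_singleton_iff, ← hc, hu]; trivial
    exact hnm ▸ hn
  refine hno c ⟨adj_iff.mpr ⟨hcv, ha, ?_⟩, adj_iff.mpr ⟨hcv, hb, ?_⟩⟩ <;>
    rw [hc, Set.disjoint_singleton_left]
  exacts [hma, hmb]

theorem uniquelyComplemented : UniquelyComplemented R :=
  ⟨complemented, fun _ _ _ hab hac _ => adj_congr_right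
    ((maxLocus_eq_compl_of_isComplementOf hab).trans
      (maxLocus_eq_compl_of_isComplementOf hac).symm)⟩

end Semilocal

end CG

open CG in
/-- For a commutative Artinian ring `R` with identity, the comaximal
graph of `R` (vertices: non-units outside `J(R)`; `x ~ y` iff `Rx + Ry = R`) is
complemented, and consequently uniquely complemented. -/
theorem stmt_16 (R : Type*) [CommRing R] [IsArtinianRing R] :
    Complemented R ∧ UniquelyComplemented R :=
  ⟨complemented, uniquelyComplemented⟩
end

section
/- Let V be a finite-dimensional vector space of dimension n ≥ 2 over a field F, with a fixed basis B = {v_1, …, v_n}. Then the nonzero component union graph UG(V) with respect to B is not complemented, and hence not uniquely complemented. -/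
/-!
Take `a` with full support. Any complement `c` of `a` has a common neighbour `d`, a contradiction.
If `c` has a zero coordinate, the indicator `d` of the zero coordinates of `c` works. If `c` has
full support, then `c ≠ a` forces the field to have an element other than `0` and `1` (over `𝔽₂`
the all-ones vector is the only vector of full support), and with two coordinates available we can
choose a third vector of full support that differs from `a` in one coordinate and from `c` in the
other.
-/

namespace UG

variable {F V : Type*} [Field F] [AddCommGroup V] [Module F V]
  {n : ℕ} (b : Module.Basis (Fin n) F V)

/-- The skeleton (support) `S_B(a)` of a vector with respect to the basis `b`. -/
def supp (a : V) : Set (Fin n) := {i | b.repr a i ≠ 0}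

/-- Adjacency in the nonzero component union graph `UG(V)`: distinct nonzero vectors
whose supports together cover the whole basis. -/
def Adj (a c : V) : Prop :=
  a ≠ c ∧ a ≠ 0 ∧ c ≠ 0 ∧ supp b a ∪ supp b c = Set.univ

/-- `c` is a complement of `a` in `UG(V)`. -/
def IsComplementOf (a c : V) : Prop :=
  Adj b a c ∧ ∀ d : V, ¬ (Adj b d a ∧ Adj b d c)

/-- `UG(V)` is complemented: every vertex (nonzero vector) has a complement. -/
def Complemented : Prop :=
  ∀ a : V, a ≠ 0 → ∃ c : V, IsComplementOf b a c

/-- `UG(V)` is uniquely complemented. -/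
def UniquelyComplemented : Prop :=
  Complemented b ∧
    ∀ a c d : V, IsComplementOf b a c → IsComplementOf b a d →
      ∀ x : V, (Adj b x c ↔ Adj b x d)

end UG

namespace UG

variable {F V : Type*} [Field F] [AddCommGroup V] [Module F V]
  {n : ℕ} (b : Module.Basis (Fin n) F V)

@[simp]
lemma repr_equivFun_symm (f : Fin n → F) (i : Fin n) : b.repr (b.equivFun.symm f) i = f i :=
  b.coord_equivFun_symm i f

lemma supp_eq_empty_iff {a : V} : supp b a = ∅ ↔ a = 0 := by
  rw [← b.repr.map_eq_zero_iff, Finsupp.ext_iff]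
  simp [supp, Set.eq_empty_iff_forall_notMem]

lemma supp_eq_univ_iff {a : V} : supp b a = Set.univ ↔ ∀ i, b.repr a i ≠ 0 := by
  simp [supp, Set.eq_univ_iff_forall]

lemma ne_zero_of_supp_eq_univ (hn : 0 < n) {a : V} (ha : supp b a = Set.univ) : a ≠ 0 := by
  rintro rfl
  exact (supp_eq_univ_iff b).1 ha ⟨0, hn⟩ (by simp)

lemma adj_of_supp_eq_univ {a c : V} (ha : supp b a = Set.univ) (hca : c ≠ a) (ha0 : a ≠ 0)
    (hc0 : c ≠ 0) : Adj b c a :=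
  ⟨hca, hc0, ha0, by simp [ha]⟩

lemma eq_of_supp_eq_univ (hF : ∀ x : F, x ≠ 0 → x = 1) {a c : V} (ha : supp b a = Set.univ)
    (hc : supp b c = Set.univ) : a = c :=
  b.repr.injective <| Finsupp.ext fun i =>
    (hF _ ((supp_eq_univ_iff b).1 ha i)).trans (hF _ ((supp_eq_univ_iff b).1 hc i)).symm

lemma exists_ne_zero_ne {x : F} (hx0 : x ≠ 0) (hx1 : x ≠ 1) (z : F) : ∃ y : F, y ≠ 0 ∧ y ≠ z := by
  by_cases hz : z = 1
  · exact ⟨x, hx0, hz ▸ hx1⟩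
  · exact ⟨1, one_ne_zero, Ne.symm hz⟩

lemma exists_supp_eq_univ_ne_ne (hn : 2 ≤ n) {x : F} (hx0 : x ≠ 0) (hx1 : x ≠ 1) (u w : V) :
    ∃ d : V, supp b d = Set.univ ∧ d ≠ u ∧ d ≠ w := by
  let i₀ : Fin n := ⟨0, by omega⟩
  let i₁ : Fin n := ⟨1, by omega⟩
  have hi : i₀ ≠ i₁ := by simp [i₀, i₁, Fin.ext_iff]
  obtain ⟨y₀, hy₀, hy₀u⟩ := exists_ne_zero_ne hx0 hx1 (b.repr u i₀)
  obtain ⟨y₁, hy₁, hy₁w⟩ := exists_ne_zero_ne hx0 hx1 (b.repr w i₁)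
  let f : Fin n → F := Function.update (Function.update 1 i₀ y₀) i₁ y₁
  refine ⟨b.equivFun.symm f, (supp_eq_univ_iff b).2 fun i => ?_, fun h => ?_, fun h => ?_⟩
  · simp only [repr_equivFun_symm, f, Function.update_apply]
    split_ifs <;> simp [*]
  · exact hy₀u (by rw [← h, repr_equivFun_symm]; simp [f, hi])
  · exact hy₁w (by rw [← h, repr_equivFun_symm]; simp [f])

open Classical in
noncomputable def zeroIndicator (c : V) : V :=
  b.equivFun.symm fun i => if b.repr c i = 0 then 1 else 0

lemma supp_zeroIndicator (c : V) : supp b (zeroIndicator b c) = (supp b c)ᶜ := by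
  ext i
  simp only [supp, zeroIndicator, Set.mem_ofPred_eq, Set.mem_compl_iff, repr_equivFun_symm]
  split_ifs <;> simp [*]

theorem exists_adj_adj_of_supp_eq_univ (hn : 2 ≤ n) {a c : V} (ha : supp b a = Set.univ)
    (hac : a ≠ c) (hc0 : c ≠ 0) : ∃ d : V, Adj b d a ∧ Adj b d c := by
  have ha0 : a ≠ 0 := ne_zero_of_supp_eq_univ b (by omega) ha
  suffices ∃ d : V, d ≠ 0 ∧ d ≠ a ∧ d ≠ c ∧ supp b d ∪ supp b c = Set.univ by
    obtain ⟨d, hd0, hda, hdc, hdcu⟩ := this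
    exact ⟨d, adj_of_supp_eq_univ b ha hda ha0 hd0, hdc, hd0, hc0, hdcu⟩
  by_cases hc : supp b c = Set.univ
  · by_cases hF : ∃ x : F, x ≠ 0 ∧ x ≠ 1
    · obtain ⟨x, hx0, hx1⟩ := hF
      obtain ⟨d, hd, hda, hdc⟩ := exists_supp_eq_univ_ne_ne b hn hx0 hx1 a c
      exact ⟨d, ne_zero_of_supp_eq_univ b (by omega) hd, hda, hdc, by simp [hd]⟩
    · push Not at hF
      exact absurd (eq_of_supp_eq_univ b hF ha hc) hac
  · have hd := supp_zeroIndicator b c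
    obtain ⟨k, hk⟩ : (supp b c).Nonempty :=
      Set.nonempty_iff_ne_empty.2 ((supp_eq_empty_iff b).not.2 hc0)
    refine ⟨zeroIndicator b c, fun h => hc ?_, fun h => ?_, fun h => ?_, by simp [hd]⟩
    · rw [h, (supp_eq_empty_iff b).2 rfl] at hd
      exact Set.compl_empty_iff.1 hd.symm
    · rw [h, ha] at hd
      exact (Set.ext_iff.1 hd k).1 trivial hk
    · rw [h] at hd
      exact (Set.ext_iff.1 hd k).1 hk hk

end UG

open UG in
/-- For a vector space `V` of dimension `n ≥ 2` over a field `F` with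
a fixed basis `B = {v₁, …, vₙ}`, the nonzero component union graph `UG(V)` with
respect to `B` is not complemented, and hence not uniquely complemented. -/
theorem stmt_17 (F V : Type*) [Field F] [AddCommGroup V] [Module F V]
    (n : ℕ) (hn : 2 ≤ n) (b : Module.Basis (Fin n) F V) :
    ¬ Complemented b ∧ ¬ UniquelyComplemented b := by
  suffices hnc : ¬ Complemented b from ⟨hnc, fun h => hnc h.1⟩
  intro hC
  let a : V := b.equivFun.symm 1
  have ha : supp b a = Set.univ := (supp_eq_univ_iff b).2 fun i => by simp [a]
  obtain ⟨c, ⟨hac, -, hc0, -⟩, hnone⟩ := hC a (ne_zero_of_supp_eq_univ b (by omega) ha)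
  obtain ⟨d, hd⟩ := exists_adj_adj_of_supp_eq_univ b hn ha hac hc0
  exact hnone d hd
end

section
/- Let S be a reduced commutative multiplicative semigroup with a zero element 0 that satisfies the annihilator condition (a.c.). Then the zero-divisor graph G(S) is complemented if and only if G(S) is uniquely complemented. -/
namespace SG

variable (S : Type*) [SemigroupWithZero S]

variable {S} in
/-- `s^(n+1)`: the `(n+1)`-st power of an element of a semigroup. -/
def spow (s : S) : ℕ → S
  | 0 => s
  | n + 1 => spow s n * s

/-- A semigroup with zero is reduced if `s^n = 0` for some `n ≥ 1` implies `s = 0`. -/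
def Reduced : Prop := ∀ (s : S) (n : ℕ), spow s n = 0 → s = 0

variable {S} in
/-- The annihilator `ann(x) = {s : s·x = 0}`. -/
def ann (x : S) : Set S := {s | s * x = 0}

/-- The annihilator condition (a.c.): for all `x, y` there is `z` with
`ann(x) ∩ ann(y) = ann(z)`. -/
def SatisfiesAC : Prop := ∀ x y : S, ∃ z : S, ann x ∩ ann y = ann z

variable {S} in
/-- Vertices of the zero-divisor graph `G(S)`: nonzero elements `x` with `x·y = 0`
for some nonzero `y`. -/
def IsVertex (x : S) : Prop := x ≠ 0 ∧ ∃ y : S, y ≠ 0 ∧ x * y = 0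

variable {S} in
/-- Adjacency in `G(S)`: distinct nonzero `x`, `y` with `x·y = 0`. -/
def Adj (x y : S) : Prop := x ≠ y ∧ x ≠ 0 ∧ y ≠ 0 ∧ x * y = 0

variable {S} in
/-- `y` is a complement of `x` in `G(S)`. -/
def IsComplementOf (x y : S) : Prop :=
  Adj x y ∧ ∀ c : S, ¬ (Adj c x ∧ Adj c y)

/-- `G(S)` is complemented. -/
def Complemented : Prop := ∀ x : S, IsVertex x → ∃ y : S, IsComplementOf x y

/-- `G(S)` is uniquely complemented. -/
def UniquelyComplemented : Prop :=
  Complemented S ∧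
    ∀ a b c : S, IsComplementOf a b → IsComplementOf a c →
      ∀ x : S, (Adj x b ↔ Adj x c)

end SG

open SG in
/-- Let `S` be a reduced commutative multiplicative semigroup with a
zero element satisfying the annihilator condition. Then the zero-divisor graph
`G(S)` is complemented iff it is uniquely complemented. -/
theorem stmt_18 (S : Type*) [SemigroupWithZero S]
    (hcomm : ∀ a b : S, a * b = b * a) (hred : Reduced S) (hac : SatisfiesAC S) :
    Complemented S ↔ UniquelyComplemented S := by
  have hsq : ∀ s : S, s * s = 0 → s = 0 := by
    intro s hs
    exact hred s 1 (by simpa [spow] using hs)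
  constructor
  · intro hC
    refine ⟨hC, ?_⟩
    rintro a b c ⟨⟨habne, ha0, hb0, hab⟩, hb⟩ ⟨⟨hacne, _, hc0, hac'⟩, hc⟩ x
    -- key: ann(a) ∩ ann(b) = {0} and ann(a) ∩ ann(c) = {0}
    have key : ∀ y d : S, Adj a d → (∀ e : S, ¬ (Adj e a ∧ Adj e d)) →
        y ≠ 0 → y * a = 0 → y * d = 0 → False := by
      rintro y d ⟨_, ha0', hd0, _⟩ hcompl hy0 hya hyd
      have hyna : y ≠ a := fun h => ha0' (hsq a (h ▸ hya))
      have hynd : y ≠ d := fun h => hd0 (hsq d (h ▸ hyd))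
      exact hcompl y ⟨⟨hyna, hy0, ha0', hya⟩, ⟨hynd, hy0, hd0, hyd⟩⟩
    have main : ∀ y : S, y ≠ 0 → y * b = 0 → y * c = 0 := by
      intro y hy0 hyb
      by_contra hyc
      apply key (y * c) b ⟨habne, ha0, hb0, hab⟩ hb hyc
      · calc y * c * a = y * (c * a) := mul_assoc y c a
          _ = y * (a * c) := by rw [hcomm c a]
          _ = y * 0 := by rw [hac']
          _ = 0 := mul_zero y
      · calc y * c * b = y * (c * b) := mul_assoc y c b
          _ = y * (b * c) := by rw [hcomm c b]
          _ = y * b * c := (mul_assoc y b c).symm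
          _ = 0 := by rw [hyb, zero_mul]
    have main' : ∀ y : S, y ≠ 0 → y * c = 0 → y * b = 0 := by
      intro y hy0 hyc
      by_contra hyb
      apply key (y * b) c ⟨hacne, ha0, hc0, hac'⟩ hc hyb
      · calc y * b * a = y * (b * a) := mul_assoc y b a
          _ = y * (a * b) := by rw [hcomm b a]
          _ = y * 0 := by rw [hab]
          _ = 0 := mul_zero y
      · calc y * b * c = y * (b * c) := mul_assoc y b c
          _ = y * (c * b) := by rw [hcomm b c]
          _ = y * c * b := (mul_assoc y c b).symm
          _ = 0 := by rw [hyc, zero_mul]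
    constructor
    · rintro ⟨hxb, hx0, _, hxb0⟩
      have hxc0 := main x hx0 hxb0
      have hxc : x ≠ c := fun h => hc0 (hsq c (h ▸ hxc0))
      exact ⟨hxc, hx0, hc0, hxc0⟩
    · rintro ⟨hxc, hx0, _, hxc0⟩
      have hxb0 := main' x hx0 hxc0
      have hxb : x ≠ b := fun h => hb0 (hsq b (h ▸ hxb0))
      exact ⟨hxb, hx0, hb0, hxb0⟩
  · exact fun h => h.1
end

section
/- Let S be a reduced commutative multiplicative semigroup with a zero element 0 that satisfies the annihilator condition (a.c.). Then the zero-divisor graph G(S) is complemented if and only if for every x ∈ S there exists y ∈ S such that x·y = 0 and ann(x) ∩ ann(y) = {0}. -/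
open SG

section Aux

variable {S : Type*} [SemigroupWithZero S]

lemma aux_sq (hred : Reduced S) {x : S} (h : x * x = 0) : x = 0 :=
  hred x 1 (by simpa [spow] using h)

lemma aux_mem_ann {x s : S} : s ∈ ann x ↔ s * x = 0 := Iff.rfl

/-- A complement has trivially intersecting annihilator. -/
lemma aux_compl (hred : Reduced S) {x y : S} (h : IsComplementOf x y) :
    ann x ∩ ann y = ({0} : Set S) := by
  obtain ⟨⟨hxy, hx0, hy0, hmul⟩, hnc⟩ := h
  ext s
  constructor
  · rintro ⟨hsx, hsy⟩
    by_contra hs0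
    simp only [Set.mem_singleton_iff] at hs0
    rcases eq_or_ne s x with rfl | hsx'
    · exact hx0 (aux_sq hred hsx)
    rcases eq_or_ne s y with rfl | hsy'
    · exact hy0 (aux_sq hred hsy)
    exact hnc s ⟨⟨hsx', hs0, hx0, hsx⟩, ⟨hsy', hs0, hy0, hsy⟩⟩
  · rintro rfl
    exact ⟨zero_mul x, zero_mul y⟩

/-- A nonzero non-vertex has trivial annihilator. -/
lemma aux_nonvertex (hcomm : ∀ a b : S, a * b = b * a) {x : S} (hx0 : x ≠ 0)
    (hnv : ¬ IsVertex x) : ann x = ({0} : Set S) := by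
  ext s
  constructor
  · intro hs
    by_contra hs0
    simp only [Set.mem_singleton_iff] at hs0
    exact hnv ⟨hx0, s, hs0, (hcomm x s).trans hs⟩
  · rintro rfl
    exact zero_mul x

lemma aux_ann_zero : (ann (0 : S)) = Set.univ := by
  ext s; simp [ann]

end Aux

/-- Let `S` be a reduced commutative multiplicative semigroup with a
zero element satisfying the annihilator condition. Then `G(S)` is complemented iff
for every `x ∈ S` there exists `y ∈ S` with `x·y = 0` and `ann(x) ∩ ann(y) = {0}`. -/
theorem stmt_19 (S : Type*) [SemigroupWithZero S]
    (hcomm : ∀ a b : S, a * b = b * a) (hred : Reduced S) (hac : SatisfiesAC S) :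
    Complemented S ↔
      ∀ x : S, ∃ y : S, x * y = 0 ∧ ann x ∩ ann y = ({0} : Set S) := by
  constructor
  · intro hc x
    rcases eq_or_ne x 0 with rfl | hx0
    · -- need y with ann y = {0}
      by_cases hv : ∃ v : S, IsVertex v
      · obtain ⟨v, hvv⟩ := hv
        obtain ⟨w, hw⟩ := hc v hvv
        obtain ⟨z, hz⟩ := hac v w
        refine ⟨z, zero_mul z, ?_⟩
        have hz0 : ann z = ({0} : Set S) := by
          rw [← hz, aux_compl hred hw]
        rw [aux_ann_zero, Set.univ_inter, hz0]
      · push_neg at hv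
        by_cases hall : ∀ s : S, s = 0
        · refine ⟨0, zero_mul 0, ?_⟩
          ext s
          simp [aux_ann_zero, hall s]
        · push_neg at hall
          obtain ⟨w, hw0⟩ := hall
          refine ⟨w, zero_mul w, ?_⟩
          rw [aux_ann_zero, Set.univ_inter, aux_nonvertex hcomm hw0 (hv w)]
    · by_cases hvx : IsVertex x
      · obtain ⟨y, hy⟩ := hc x hvx
        exact ⟨y, hy.1.2.2.2, aux_compl hred hy⟩
      · refine ⟨0, mul_zero x, ?_⟩
        rw [aux_ann_zero, Set.inter_univ, aux_nonvertex hcomm hx0 hvx]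
  · intro h x hvx
    obtain ⟨y, hxy, hann⟩ := h x
    have hy0 : y ≠ 0 := by
      rintro rfl
      obtain ⟨hx0, s, hs0, hsx⟩ := hvx
      have : s ∈ ann x ∩ ann (0 : S) :=
        ⟨(hcomm s x).trans hsx, mul_zero s⟩
      rw [hann] at this
      exact hs0 this
    have hx0 : x ≠ 0 := hvx.1
    have hne : x ≠ y := by
      rintro rfl
      exact hx0 (aux_sq hred hxy)
    refine ⟨y, ⟨hne, hx0, hy0, hxy⟩, ?_⟩
    rintro c ⟨⟨hcx, hc0, -, hcx0⟩, ⟨hcy, -, -, hcy0⟩⟩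
    have : c ∈ ann x ∩ ann y := ⟨hcx0, hcy0⟩
    rw [hann] at this
    exact hc0 this
end
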